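/- arXiv:2406.15974 — 2 statements merged into one kernel-verified Lean document; each statement's English description precedes it below -/
import Mathlib

section
/- Let E be a metric space, h : E → ℝ continuous with M := sup_{x∈E} h(x) ≥ 0 finite. Suppose (p_t) is a family of sub-Markovian kernels on E such that h − M ≤ p_t(h − M) pointwise for all t > 0, and suppose the following irreducibility property: for every nonempty open set G and every x ∈ E, ∫_0^∞ e^{-t} p_t(1_G)(x) dt > 0. Then either h ≡ M or h(x) < M for all x ∈ E. -/
open MeasureTheory Filter

theorem stmt_4 {E : Type*} [MetricSpace E] (h : E → ℝ) (hc : Continuous h)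
    (M : ℝ) (hM : IsLUB (Set.range h) M) (hM0 : 0 ≤ M)
    (T : ℝ → (E → ℝ) → (E → ℝ))
    (hlin : ∀ t, 0 < t → IsLinearMap ℝ (T t))
    (hpos : ∀ t, 0 < t → ∀ f : E → ℝ, (∀ x, 0 ≤ f x) → ∀ x, 0 ≤ T t f x)
    (hsub : ∀ t, 0 < t → ∀ f : E → ℝ, (∀ x, 0 ≤ f x) → ∀ C : ℝ, (∀ x, f x ≤ C) →
      ∀ x, T t f x ≤ C)
    (hconst : ∀ t, 0 < t → ∀ c : ℝ, 0 ≤ c → ∀ x, T t (fun _ => c) x ≤ c)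
    (hirr : ∀ G : Set E, IsOpen G → G.Nonempty → ∀ x,
      0 < ∫ s in Set.Ioi (0:ℝ), Real.exp (-s) * T s (G.indicator 1) x)
    (hsubsol : ∀ t, 0 < t → ∀ x, h x - M ≤ T t (fun y => h y - M) x) :
    (∀ x, h x = M) ∨ (∀ x, h x < M) := by
  by_cases hall : ∀ x, h x < M
  · exact Or.inr hall
  push_neg at hall
  obtain ⟨x₀, hx₀⟩ := hall
  have hle : ∀ x, h x ≤ M := fun x => hM.1 ⟨x, rfl⟩
  have hx0 : h x₀ = M := le_antisymm (hle x₀) hx₀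
  left
  intro y
  by_contra hy
  have hy' : h y < M := lt_of_le_of_ne (hle y) hy
  set ε : ℝ := (M - h y) / 2 with hε
  have hεpos : 0 < ε := by simp only [hε]; linarith
  set G : Set E := {z | h z < M - ε} with hG
  have hGopen : IsOpen G := isOpen_lt hc continuous_const
  have hGne : G.Nonempty := ⟨y, by simp only [hG, Set.mem_setOf_eq]; linarith⟩
  have hTzero : ∀ t, 0 < t → T t (fun z => M - h z) x₀ = 0 := by
    intro t ht
    have h1 := hsubsol t ht x₀
    have hfun : (fun z => h z - M) = -(fun z => M - h z) := by
      funext z; simp only [Pi.neg_apply]; ring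
    have hneg : T t (fun z => h z - M) x₀ = -T t (fun z => M - h z) x₀ := by
      rw [hfun, (hlin t ht).map_neg]; simp
    have h2 : 0 ≤ T t (fun z => M - h z) x₀ :=
      hpos t ht _ (fun z => by linarith [hle z]) x₀
    rw [hx0, hneg] at h1
    linarith
  have hTG : ∀ t, 0 < t → T t (G.indicator 1) x₀ = 0 := by
    intro t ht
    have hnn : ∀ z, 0 ≤ (fun z => M - h z - ε * G.indicator 1 z) z := by
      intro z
      by_cases hz : z ∈ G
      · simp only [Set.indicator_of_mem hz, Pi.one_apply, mul_one]
        have : h z < M - ε := hz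
        linarith
      · simp only [Set.indicator_of_notMem hz, mul_zero]
        linarith [hle z]
    have h3 := hpos t ht _ hnn x₀
    have hdecomp : (fun z => M - h z - ε * G.indicator 1 z)
        = (fun z => M - h z) - ε • G.indicator 1 := by
      funext z; simp [smul_eq_mul]
    have h4 : T t (fun z => M - h z - ε * G.indicator 1 z) x₀
        = T t (fun z => M - h z) x₀ - ε * T t (G.indicator 1) x₀ := by
      rw [hdecomp, (hlin t ht).map_sub, (hlin t ht).map_smul]
      simp [smul_eq_mul]
    have h5 : 0 ≤ T t (G.indicator 1) x₀ :=
      hpos t ht _ (fun z => Set.indicator_nonneg (fun _ _ => zero_le_one) z) x₀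
    rw [h4, hTzero t ht] at h3
    nlinarith
  have hint := hirr G hGopen hGne x₀
  have hzero : (∫ s in Set.Ioi (0:ℝ), Real.exp (-s) * T s (G.indicator 1) x₀) = 0 := by
    rw [setIntegral_congr_fun measurableSet_Ioi
      (fun s hs => by rw [hTG s hs, mul_zero])]
    simp
  rw [hzero] at hint
  exact lt_irrefl 0 hint
end

section
/- Let (p_t) be a sub-Markovian semigroup with resolvent R_1 f(x) = ∫_0^∞ e^{-t} p_t f(x) dt. If h ≤ 0 is a bounded measurable function with h ≤ p_t h pointwise for all t > 0, and if there is an open set G = {h < 0} with ∫_0^∞ e^{-t} p_t(h 1_G)(x) dt < 0 for all x, then h(x) < 0 for all x ∈ E unless h ≡ 0. -/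
open MeasureTheory Filter

theorem stmt_5 {E : Type*} [TopologicalSpace E] [MeasurableSpace E]
    (T : ℝ → (E → ℝ) → (E → ℝ))
    (hlin : ∀ t, 0 < t → IsLinearMap ℝ (T t))
    (hpos : ∀ t, 0 < t → ∀ f : E → ℝ, (∀ x, 0 ≤ f x) → ∀ x, 0 ≤ T t f x)
    (hsub : ∀ t, 0 < t → ∀ f : E → ℝ, (∀ x, 0 ≤ f x) → ∀ C : ℝ, (∀ x, f x ≤ C) →
      ∀ x, T t f x ≤ C)
    (hsemi : ∀ s t : ℝ, 0 < s → 0 < t → ∀ f : E → ℝ, T s (T t f) = T (s + t) f)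
    (h : E → ℝ) (hmeas : Measurable h) (hbdd : ∃ C : ℝ, ∀ x, |h x| ≤ C)
    (hle0 : ∀ x, h x ≤ 0)
    (hsubinv : ∀ t, 0 < t → ∀ x, h x ≤ T t h x)
    (G : Set E) (hG : G = {x | h x < 0}) (hGopen : IsOpen G)
    (hR : ∀ x, (∫ s in Set.Ioi (0:ℝ), Real.exp (-s) * T s (G.indicator h) x) < 0) :
    (∀ x, h x = 0) ∨ (∀ x, h x < 0) := by
  right
  intro x
  by_contra hx
  have hx0 : h x = 0 := le_antisymm (hle0 x) (not_lt.mp hx)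
  have hind : G.indicator h = h := by
    funext y
    by_cases hy : y ∈ G
    · simp [Set.indicator_of_mem hy]
    · rw [Set.indicator_of_notMem hy]
      have : ¬ h y < 0 := by simpa [hG] using hy
      linarith [hle0 y]
  have hT0 : ∀ s, 0 < s → T s h x = 0 := by
    intro s hs
    have h1 := hsubinv s hs x
    have h2 : T s h x ≤ 0 := by
      have hp := hpos s hs (-h) (fun y => by simpa using hle0 y) x
      have hneg : T s (-h) = -T s h := (hlin s hs).map_neg h
      rw [hneg] at hp
      simpa using hp
    linarith
  have hzero : (∫ s in Set.Ioi (0:ℝ), Real.exp (-s) * T s (G.indicator h) x) = 0 := by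
    rw [hind]
    rw [MeasureTheory.setIntegral_congr_fun measurableSet_Ioi
      (g := fun _ => (0:ℝ)) (fun s hs => by simp [hT0 s hs])]
    simp
  linarith [hR x]
end
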